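/- arXiv:2305.04164 — 4 statements merged into one kernel-verified Lean document; each statement's English description precedes it below -/
import Mathlib

section
/- There is a unique involutive ring homomorphism x ↦ x̄ on B_{m,n}(q,t) which is ℚ-linear, semilinear with respect to the field involution of ℚ(q,t) sending q ↦ q⁻¹ and t ↦ t⁻¹, and satisfies H̄_i = H_i⁻¹ for every generator H_i and ē = e. -/
open scoped Classical

noncomputable section

/-- The field `ℚ(q,t)` of rational functions in two indeterminates over `ℚ`. -/
abbrev KK : Type := FractionRing (MvPolynomial (Fin 2) ℚ)

/-- The indeterminate `q` viewed inside `ℚ(q,t)`. -/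
def qv : KK := algebraMap (MvPolynomial (Fin 2) ℚ) KK (MvPolynomial.X 0)

/-- The indeterminate `t` viewed inside `ℚ(q,t)`. -/
def tv : KK := algebraMap (MvPolynomial (Fin 2) ℚ) KK (MvPolynomial.X 1)

/-- The valid indices `i` for the generators `H i` of `B_{m,n}(q,t)`:
`1 ≤ i ≤ n - 1` or `1 ≤ -i ≤ m - 1`. -/
def validIdx (m n : ℕ) (i : ℤ) : Prop :=
  (1 ≤ i ∧ i ≤ (n : ℤ) - 1) ∨ (1 ≤ -i ∧ -i ≤ (m : ℤ) - 1)

/-- Generators of the quantized walled Brauer algebra `B_{m,n}(q,t)`. -/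
inductive WBgen (m n : ℕ) : Type
  | H (i : ℤ) (h : validIdx m n i) : WBgen m n
  | E : WBgen m n

/-- The generator `H i` in the free algebra. -/
def fH (m n : ℕ) (i : ℤ) (h : validIdx m n i) : FreeAlgebra KK (WBgen m n) :=
  FreeAlgebra.ι KK (WBgen.H i h)

/-- The generator `e` in the free algebra. -/
def fE (m n : ℕ) : FreeAlgebra KK (WBgen m n) := FreeAlgebra.ι KK WBgen.E

/-- The element `H i - (q - q⁻¹)`, which becomes the inverse of `H i` in the quotient. -/
def fHinv (m n : ℕ) (i : ℤ) (h : validIdx m n i) : FreeAlgebra KK (WBgen m n) :=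
  fH m n i h - algebraMap KK _ (qv - qv⁻¹)

/-- The defining relations of the quantized walled Brauer algebra `B_{m,n}(q,t)`. -/
inductive WBrel (m n : ℕ) :
    FreeAlgebra KK (WBgen m n) → FreeAlgebra KK (WBgen m n) → Prop
  | quad (i : ℤ) (h : validIdx m n i) :
      WBrel m n ((fH m n i h - algebraMap KK _ qv) * (fH m n i h + algebraMap KK _ qv⁻¹)) 0
  | comm (i : ℤ) (hi : validIdx m n i) (j : ℤ) (hj : validIdx m n j) (hij : 1 < |i - j|) :
      WBrel m n (fH m n i hi * fH m n j hj) (fH m n j hj * fH m n i hi)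
  | braid (i : ℤ) (hi : validIdx m n i) (hi1 : validIdx m n (i + 1)) :
      WBrel m n (fH m n i hi * fH m n (i + 1) hi1 * fH m n i hi)
        (fH m n (i + 1) hi1 * fH m n i hi * fH m n (i + 1) hi1)
  | commE (i : ℤ) (hi : validIdx m n i) (h2 : 2 ≤ |i|) :
      WBrel m n (fH m n i hi * fE m n) (fE m n * fH m n i hi)
  | eHe (i : ℤ) (hi : validIdx m n i) (h : i = 1 ∨ i = -1) :
      WBrel m n (fE m n * fH m n i hi * fE m n) (algebraMap KK _ tv * fE m n)
  | esq : WBrel m n (fE m n * fE m n)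
      (algebraMap KK _ ((tv - tv⁻¹) / (qv - qv⁻¹)) * fE m n)
  | rel7 (h1 : validIdx m n 1) (hm : validIdx m n (-1)) :
      WBrel m n (fE m n * fHinv m n (-1) hm * fH m n 1 h1 * fE m n * fH m n (-1) hm)
        (fE m n * fHinv m n (-1) hm * fH m n 1 h1 * fE m n * fH m n 1 h1)
  | rel8 (h1 : validIdx m n 1) (hm : validIdx m n (-1)) :
      WBrel m n (fH m n (-1) hm * fE m n * fHinv m n (-1) hm * fH m n 1 h1 * fE m n)
        (fH m n 1 h1 * fE m n * fHinv m n (-1) hm * fH m n 1 h1 * fE m n)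

/-- The quantized walled Brauer algebra `B_{m,n}(q,t)`. -/
abbrev WB (m n : ℕ) : Type := RingQuot (WBrel m n)

/-- The generator `H i` of `B_{m,n}(q,t)`. -/
def HB (m n : ℕ) (i : ℤ) (h : validIdx m n i) : WB m n :=
  RingQuot.mkAlgHom KK (WBrel m n) (fH m n i h)

/-- The generator `e` of `B_{m,n}(q,t)`. -/
def EB (m n : ℕ) : WB m n := RingQuot.mkAlgHom KK (WBrel m n) (fE m n)

/-- The inverse `H i⁻¹ = H i - (q - q⁻¹)` of the generator `H i`. -/
def HBinv (m n : ℕ) (i : ℤ) (h : validIdx m n i) : WB m n :=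
  HB m n i h - algebraMap KK _ (qv - qv⁻¹)

/-- Total version of `H i` (equal to `H i` for valid `i`, junk value `1` otherwise). -/
def Htil (m n : ℕ) (i : ℤ) : WB m n :=
  if h : validIdx m n i then HB m n i h else 1

/-- Total version of `H i⁻¹` (equal to `H i⁻¹` for valid `i`, junk value `1` otherwise). -/
def Htilinv (m n : ℕ) (i : ℤ) : WB m n :=
  if h : validIdx m n i then HBinv m n i h else 1

/-- The elements `e_k`:  `e_0 = 1`, `e_1 = e`, and
`e_{k+1} = e ⬝ H_{-1}⁻¹ H_{-2}⁻¹ ⋯ H_{-k}⁻¹ ⬝ H_1 H_2 ⋯ H_k ⬝ e_k`. -/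
def ek (m n : ℕ) : ℕ → WB m n
  | 0 => 1
  | k + 1 =>
      EB m n *
        (((List.range k).map (fun j => Htilinv m n (-((j + 1 : ℕ) : ℤ)))).prod) *
        (((List.range k).map (fun j => Htil m n ((j + 1 : ℕ) : ℤ))).prod) *
        ek m n k

/-!
The bar map is built on the free algebra as the `σ`-semilinear ring map sending `Hᵢ ↦ Hᵢ⁻¹` and
`e ↦ e`, i.e. as an algebra map for the `σ`-twisted `ℚ(q,t)`-structure on `B_{m,n}`. It respects
the defining relations: the quadratic relation makes `Hᵢ` a unit with inverse
`Hᵢ - (q - q⁻¹)`, so (1) holds as `Hᵢ⁻¹ - q⁻¹ = Hᵢ - q` and `Hᵢ⁻¹ + q = Hᵢ + q⁻¹`, and (2)–(4)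
follow by inverting; (5) and (6) because `σ` fixes
`(t - t⁻¹)/(q - q⁻¹)` and `e Hᵢ⁻¹ e = (t - (q - q⁻¹)(t - t⁻¹)/(q - q⁻¹)) e = t⁻¹ e`; and (7), (8)
because `e H₋₁ H₁⁻¹ e = e H₋₁⁻¹ H₁ e` (both equal `e H₋₁ H₁ e - (q - q⁻¹) t e`) together with
the commuting of `H₋₁` and `H₁`. Hence it descends to `B_{m,n}`. A ring map out of `B_{m,n}` is
determined by its values on scalars and generators, which gives both involutivity and uniqueness.
-/

theorem KK.ringHom_ext {R : Type*} [Semiring R] {f g : KK →+* R}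
    (hq : f qv = g qv) (ht : f tv = g tv) : f = g :=
  IsLocalization.ringHom_ext (nonZeroDivisors (MvPolynomial (Fin 2) ℚ)) <|
    MvPolynomial.ringHom_ext
      (RingHom.congr_fun <| RingHom.ext_rat ((f.comp (algebraMap _ KK)).comp MvPolynomial.C)
        ((g.comp (algebraMap _ KK)).comp MvPolynomial.C))
      (fun i => by fin_cases i; exacts [hq, ht])

theorem qv_ne_zero : qv ≠ 0 :=
  (map_ne_zero_iff _ (IsFractionRing.injective _ KK)).2 (MvPolynomial.X_ne_zero 0)

theorem qv_sub_inv_ne_zero : qv - qv⁻¹ ≠ 0 := by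
  intro h
  have hsq : algebraMap (MvPolynomial (Fin 2) ℚ) KK (MvPolynomial.X 0 * MvPolynomial.X 0) =
      algebraMap (MvPolynomial (Fin 2) ℚ) KK 1 := by
    rw [map_mul, map_one, ← qv]
    nth_rw 2 [sub_eq_zero.mp h]
    exact mul_inv_cancel₀ qv_ne_zero
  have h0 := congrArg (MvPolynomial.eval fun _ => (0 : ℚ)) (IsFractionRing.injective _ KK hsq)
  rw [map_mul, MvPolynomial.eval_X, map_one] at h0
  norm_num at h0

section Involution

variable {F : Type*} [Field F] {σ : F →+* F} {a b : F}

theorem map_sub_inv_of_map_eq_inv (ha : σ a = a⁻¹) : σ (a - a⁻¹) = -(a - a⁻¹) := by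
  rw [map_sub, map_inv₀, ha, inv_inv, neg_sub]

theorem map_sub_inv_div_sub_inv (ha : σ a = a⁻¹) (hb : σ b = b⁻¹) :
    σ ((b - b⁻¹) / (a - a⁻¹)) = (b - b⁻¹) / (a - a⁻¹) := by
  rw [map_div₀, map_sub_inv_of_map_eq_inv ha, map_sub_inv_of_map_eq_inv hb, neg_div_neg_eq]

end Involution

theorem involutive_of_map_qv_of_map_tv {σ : KK →+* KK} (hσq : σ qv = qv⁻¹)
    (hσt : σ tv = tv⁻¹) : Function.Involutive σ :=
  RingHom.congr_fun (f := σ.comp σ) (g := RingHom.id KK) <| KK.ringHom_ext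
    (by simp [hσq]) (by simp [hσt])

section Units

variable {M : Type*} [Monoid M] {u v : Mˣ} {x : M}

theorem mul_units_inv_eq_of_mul_eq (huv : Commute (u : M) v) (h : x * u = x * v) :
    x * ↑u⁻¹ = x * ↑v⁻¹ :=
  calc x * ↑u⁻¹ = x * v * ↑v⁻¹ * ↑u⁻¹ := by simp [mul_assoc]
    _ = x * ↑v⁻¹ * (u * ↑u⁻¹) := by
      rw [← h, mul_assoc x, huv.units_inv_right.eq]
      simp only [mul_assoc]
    _ = x * ↑v⁻¹ := by simp

theorem units_inv_mul_eq_of_mul_eq (huv : Commute (u : M) v) (h : u * x = v * x) :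
    ↑u⁻¹ * x = ↑v⁻¹ * x :=
  calc ↑u⁻¹ * x = ↑u⁻¹ * ↑v⁻¹ * (v * x) := by simp [mul_assoc]
    _ = (↑u⁻¹ * u) * (↑v⁻¹ * x) := by
      rw [← h, ← mul_assoc, mul_assoc _ _ (u : M), ← huv.units_inv_right.eq]
      simp only [mul_assoc]
    _ = ↑v⁻¹ * x := by simp

end Units

section HeckeRelations

variable {K A : Type*} [Field K] [Ring A] [Algebra K A] {c : K} {H : A}

theorem hecke_sq (hc : c ≠ 0)
    (hH : (H - algebraMap K A c) * (H + algebraMap K A c⁻¹) = 0) :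
    H * H = algebraMap K A (c - c⁻¹) * H + 1 := by
  have hcc : algebraMap K A c * algebraMap K A c⁻¹ = 1 := by
    rw [← map_mul, mul_inv_cancel₀ hc, map_one]
  rw [sub_mul, mul_add, mul_add, ← Algebra.commutes c⁻¹ H, hcc] at hH
  rw [map_sub, sub_mul, ← sub_eq_zero, ← hH]
  abel

theorem hecke_mul_sub_eq_one (hc : c ≠ 0)
    (hH : (H - algebraMap K A c) * (H + algebraMap K A c⁻¹) = 0) :
    H * (H - algebraMap K A (c - c⁻¹)) = 1 := by
  rw [mul_sub, hecke_sq hc hH, Algebra.commutes, add_sub_cancel_left]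

theorem hecke_sub_mul_eq_one (hc : c ≠ 0)
    (hH : (H - algebraMap K A c) * (H + algebraMap K A c⁻¹) = 0) :
    (H - algebraMap K A (c - c⁻¹)) * H = 1 := by
  rw [sub_mul, hecke_sq hc hH, add_sub_cancel_left]

theorem hecke_quad_sub
    (hH : (H - algebraMap K A c) * (H + algebraMap K A c⁻¹) = 0) :
    (H - algebraMap K A (c - c⁻¹) - algebraMap K A c⁻¹) *
      (H - algebraMap K A (c - c⁻¹) + algebraMap K A c) = 0 := by
  rw [← hH, map_sub]
  congr 1 <;> abel

variable {e a b : A} {s δ d : K}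

theorem mul_sub_algebraMap_mul (heHe : e * H * e = algebraMap K A s * e)
    (hee : e * e = algebraMap K A δ * e) :
    e * (H - algebraMap K A d) * e = algebraMap K A (s - d * δ) * e := by
  rw [mul_sub, sub_mul, heHe, ← Algebra.commutes, mul_assoc, hee, ← mul_assoc, ← map_mul,
    ← sub_mul, ← map_sub]

theorem mul_mul_sub_algebraMap_mul (hae : e * a * e = algebraMap K A s * e)
    (hbe : e * b * e = algebraMap K A s * e) :
    e * a * (b - algebraMap K A d) * e = e * (a - algebraMap K A d) * b * e := by
  have hae' : e * a * algebraMap K A d * e = algebraMap K A d * (algebraMap K A s * e) := by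
    rw [← Algebra.commutes, ← hae]; simp only [mul_assoc]
  have hbe' : e * algebraMap K A d * b * e = algebraMap K A d * (algebraMap K A s * e) := by
    rw [← Algebra.commutes, ← hbe]; simp only [mul_assoc]
  rw [mul_sub, sub_mul, hae', mul_sub, sub_mul, sub_mul, hbe']

end HeckeRelations

namespace WB

variable {m n : ℕ}

theorem HB_quad {i : ℤ} (h : validIdx m n i) :
    (HB m n i h - algebraMap KK _ qv) * (HB m n i h + algebraMap KK _ qv⁻¹) = 0 := by
  simpa [HB] using RingQuot.mkAlgHom_rel KK (WBrel.quad i h)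

theorem HB_commute {i j : ℤ} (hi : validIdx m n i) (hj : validIdx m n j) (hij : 1 < |i - j|) :
    Commute (HB m n i hi) (HB m n j hj) := by
  have h := RingQuot.mkAlgHom_rel KK (WBrel.comm i hi j hj hij)
  rw [map_mul, map_mul] at h
  exact h

theorem HB_braid {i : ℤ} (hi : validIdx m n i) (hi1 : validIdx m n (i + 1)) :
    HB m n i hi * HB m n (i + 1) hi1 * HB m n i hi
      = HB m n (i + 1) hi1 * HB m n i hi * HB m n (i + 1) hi1 := by
  simpa [HB] using RingQuot.mkAlgHom_rel KK (WBrel.braid i hi hi1)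

theorem HB_commute_EB {i : ℤ} (hi : validIdx m n i) (h2 : 2 ≤ |i|) :
    Commute (HB m n i hi) (EB m n) := by
  have h := RingQuot.mkAlgHom_rel KK (WBrel.commE i hi h2)
  rw [map_mul, map_mul] at h
  exact h

theorem EB_mul_HB_mul_EB {i : ℤ} (hi : validIdx m n i) (h : i = 1 ∨ i = -1) :
    EB m n * HB m n i hi * EB m n = algebraMap KK _ tv * EB m n := by
  simpa [HB, EB] using RingQuot.mkAlgHom_rel KK (WBrel.eHe i hi h)

theorem EB_mul_EB :
    EB m n * EB m n = algebraMap KK _ ((tv - tv⁻¹) / (qv - qv⁻¹)) * EB m n := by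
  simpa [EB] using RingQuot.mkAlgHom_rel KK (WBrel.esq (m := m) (n := n))

theorem mkAlgHom_fHinv {i : ℤ} (h : validIdx m n i) :
    RingQuot.mkAlgHom KK (WBrel m n) (fHinv m n i h) = HBinv m n i h := by
  simp [fHinv, HBinv, HB]

theorem HB_rel7 (h1 : validIdx m n 1) (hm : validIdx m n (-1)) :
    EB m n * HBinv m n (-1) hm * HB m n 1 h1 * EB m n * HB m n (-1) hm
      = EB m n * HBinv m n (-1) hm * HB m n 1 h1 * EB m n * HB m n 1 h1 := by
  simpa [HB, EB, mkAlgHom_fHinv] using RingQuot.mkAlgHom_rel KK (WBrel.rel7 h1 hm)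

theorem HB_rel8 (h1 : validIdx m n 1) (hm : validIdx m n (-1)) :
    HB m n (-1) hm * EB m n * HBinv m n (-1) hm * HB m n 1 h1 * EB m n
      = HB m n 1 h1 * EB m n * HBinv m n (-1) hm * HB m n 1 h1 * EB m n := by
  simpa [HB, EB, mkAlgHom_fHinv] using RingQuot.mkAlgHom_rel KK (WBrel.rel8 h1 hm)

theorem HB_mul_HBinv {i : ℤ} (h : validIdx m n i) : HB m n i h * HBinv m n i h = 1 :=
  hecke_mul_sub_eq_one (H := HB m n i h) qv_ne_zero (HB_quad h)

theorem HBinv_mul_HB {i : ℤ} (h : validIdx m n i) : HBinv m n i h * HB m n i h = 1 :=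
  hecke_sub_mul_eq_one (H := HB m n i h) qv_ne_zero (HB_quad h)

def HBunit {i : ℤ} (h : validIdx m n i) : (WB m n)ˣ :=
  ⟨HB m n i h, HBinv m n i h, HB_mul_HBinv h, HBinv_mul_HB h⟩

@[simp]
theorem val_HBunit {i : ℤ} (h : validIdx m n i) : (HBunit h : WB m n) = HB m n i h := rfl

@[simp]
theorem val_inv_HBunit {i : ℤ} (h : validIdx m n i) : (↑(HBunit h)⁻¹ : WB m n) = HBinv m n i h :=
  rfl

theorem HBinv_quad {i : ℤ} (h : validIdx m n i) :
    (HBinv m n i h - algebraMap KK _ qv⁻¹) * (HBinv m n i h + algebraMap KK _ qv) = 0 :=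
  hecke_quad_sub (H := HB m n i h) (HB_quad h)

theorem HBinv_commute {i j : ℤ} (hi : validIdx m n i) (hj : validIdx m n j) (hij : 1 < |i - j|) :
    Commute (HBinv m n i hi) (HBinv m n j hj) := by
  simpa using ((HB_commute hi hj hij).units_inv_left (u := HBunit hi)).units_inv_right
    (u := HBunit hj)

theorem HBinv_braid {i : ℤ} (hi : validIdx m n i) (hi1 : validIdx m n (i + 1)) :
    HBinv m n i hi * HBinv m n (i + 1) hi1 * HBinv m n i hi
      = HBinv m n (i + 1) hi1 * HBinv m n i hi * HBinv m n (i + 1) hi1 := by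
  have h : HBunit hi * HBunit hi1 * HBunit hi = HBunit hi1 * HBunit hi * HBunit hi1 :=
    Units.ext (HB_braid hi hi1)
  simpa [mul_assoc] using congrArg (fun u => ((u⁻¹ : (WB m n)ˣ) : WB m n)) h

theorem HBinv_commute_EB {i : ℤ} (hi : validIdx m n i) (h2 : 2 ≤ |i|) :
    Commute (HBinv m n i hi) (EB m n) :=
  (HB_commute_EB hi h2).units_inv_left (u := HBunit hi)

theorem EB_mul_HBinv_mul_EB {i : ℤ} (hi : validIdx m n i) (h : i = 1 ∨ i = -1) :
    EB m n * HBinv m n i hi * EB m n = algebraMap KK _ tv⁻¹ * EB m n :=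
  (mul_sub_algebraMap_mul (H := HB m n i hi) (EB_mul_HB_mul_EB hi h) EB_mul_EB).trans <| by
    rw [mul_div_cancel₀ _ qv_sub_inv_ne_zero, sub_sub_cancel]

theorem EB_mul_HB_mul_HBinv_mul_EB (h1 : validIdx m n 1) (hm : validIdx m n (-1)) :
    EB m n * HB m n (-1) hm * HBinv m n 1 h1 * EB m n
      = EB m n * HBinv m n (-1) hm * HB m n 1 h1 * EB m n :=
  mul_mul_sub_algebraMap_mul (A := WB m n) (EB_mul_HB_mul_EB hm (.inr rfl))
    (EB_mul_HB_mul_EB h1 (.inl rfl))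

theorem HBinv_rel7 (h1 : validIdx m n 1) (hm : validIdx m n (-1)) :
    EB m n * HB m n (-1) hm * HBinv m n 1 h1 * EB m n * HBinv m n (-1) hm
      = EB m n * HB m n (-1) hm * HBinv m n 1 h1 * EB m n * HBinv m n 1 h1 := by
  rw [EB_mul_HB_mul_HBinv_mul_EB h1 hm]
  simpa using mul_units_inv_eq_of_mul_eq (u := HBunit hm) (v := HBunit h1)
    (HB_commute hm h1 (by norm_num)) (HB_rel7 h1 hm)

theorem HBinv_rel8 (h1 : validIdx m n 1) (hm : validIdx m n (-1)) :
    HBinv m n (-1) hm * EB m n * HB m n (-1) hm * HBinv m n 1 h1 * EB m n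
      = HBinv m n 1 h1 * EB m n * HB m n (-1) hm * HBinv m n 1 h1 * EB m n := by
  have h := EB_mul_HB_mul_HBinv_mul_EB h1 hm
  have h8 := HB_rel8 h1 hm
  simp only [mul_assoc] at h h8 ⊢
  rw [h]
  simpa using units_inv_mul_eq_of_mul_eq (u := HBunit hm) (v := HBunit h1)
    (HB_commute hm h1 (by norm_num)) h8

theorem ringHom_ext {R : Type*} [Semiring R] {f g : WB m n →+* R}
    (hc : ∀ c : KK, f (algebraMap KK _ c) = g (algebraMap KK _ c))
    (hH : ∀ (i : ℤ) (h : validIdx m n i), f (HB m n i h) = g (HB m n i h))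
    (hE : f (EB m n) = g (EB m n)) : f = g := by
  refine RingHom.ext fun x => ?_
  obtain ⟨x, rfl⟩ := RingQuot.mkAlgHom_surjective KK (WBrel m n) x
  induction x using FreeAlgebra.induction with
  | grade0 c => rw [AlgHom.commutes]; exact hc c
  | grade1 g => cases g with
    | H i h => exact hH i h
    | E => exact hE
  | mul a b ha hb => rw [map_mul, map_mul, map_mul, ha, hb]
  | add a b ha hb => rw [map_add, map_add, map_add, ha, hb]

def barGen : WBgen m n → WB m n
  | .H i h => HBinv m n i h
  | .E => EB m n

variable (σ : KK →+* KK)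

def barFree : FreeAlgebra KK (WBgen m n) →+* WB m n :=
  letI := Algebra.compHom (WB m n) σ
  (FreeAlgebra.lift KK barGen).toRingHom

theorem barFree_ι (g : WBgen m n) : barFree σ (FreeAlgebra.ι KK g) = barGen g :=
  letI := Algebra.compHom (WB m n) σ
  FreeAlgebra.lift_ι_apply barGen g

theorem barFree_algebraMap (c : KK) :
    barFree σ (algebraMap KK _ c) = algebraMap KK (WB m n) (σ c) :=
  letI := Algebra.compHom (WB m n) σ
  (FreeAlgebra.lift KK barGen).commutes c

theorem barFree_fH {i : ℤ} (h : validIdx m n i) : barFree σ (fH m n i h) = HBinv m n i h :=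
  barFree_ι σ _

theorem barFree_fE : barFree σ (fE m n) = EB m n :=
  barFree_ι σ _

variable {σ}

theorem barFree_fHinv (hσq : σ qv = qv⁻¹) {i : ℤ} (h : validIdx m n i) :
    barFree σ (fHinv m n i h) = HB m n i h := by
  rw [fHinv, map_sub, barFree_fH, barFree_algebraMap, map_sub_inv_of_map_eq_inv hσq, map_neg,
    sub_neg_eq_add]
  exact sub_add_cancel (HB m n i h) _

theorem barFree_rel (hσq : σ qv = qv⁻¹) (hσt : σ tv = tv⁻¹) ⦃x y : FreeAlgebra KK (WBgen m n)⦄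
    (hxy : WBrel m n x y) : barFree σ x = barFree σ y := by
  induction hxy with
  | quad i h =>
    simp only [map_mul, map_sub, map_add, map_zero, barFree_fH, barFree_algebraMap, hσq, map_inv₀,
      inv_inv]
    exact HBinv_quad h
  | comm i hi j hj hij =>
    simp only [map_mul, barFree_fH]
    exact (HBinv_commute hi hj hij).eq
  | braid i hi hi1 =>
    simp only [map_mul, barFree_fH]
    exact HBinv_braid hi hi1
  | commE i hi h2 =>
    simp only [map_mul, barFree_fH, barFree_fE]
    exact (HBinv_commute_EB hi h2).eq
  | eHe i hi h =>
    simp only [map_mul, barFree_fH, barFree_fE, barFree_algebraMap, hσt]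
    exact EB_mul_HBinv_mul_EB hi h
  | esq =>
    simp only [map_mul, barFree_fE, barFree_algebraMap, map_sub_inv_div_sub_inv hσq hσt]
    exact EB_mul_EB
  | rel7 h1 hm =>
    simp only [map_mul, barFree_fH, barFree_fE, barFree_fHinv hσq]
    exact HBinv_rel7 h1 hm
  | rel8 h1 hm =>
    simp only [map_mul, barFree_fH, barFree_fE, barFree_fHinv hσq]
    exact HBinv_rel8 h1 hm

def bar (hσq : σ qv = qv⁻¹) (hσt : σ tv = tv⁻¹) : WB m n →+* WB m n :=
  RingQuot.lift ⟨barFree σ, barFree_rel hσq hσt⟩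

variable (hσq : σ qv = qv⁻¹) (hσt : σ tv = tv⁻¹)

theorem bar_mkAlgHom (x : FreeAlgebra KK (WBgen m n)) :
    bar hσq hσt (RingQuot.mkAlgHom KK (WBrel m n) x) = barFree σ x :=
  (congrArg (bar hσq hσt) (RingHom.congr_fun (RingQuot.mkAlgHom_coe KK (WBrel m n)) x)).trans
    (RingQuot.lift_mkRingHom_apply (barFree σ) (barFree_rel hσq hσt) x)

theorem bar_algebraMap (c : KK) :
    bar hσq hσt (algebraMap KK (WB m n) c) = algebraMap KK (WB m n) (σ c) := by
  rw [← (RingQuot.mkAlgHom KK (WBrel m n)).commutes, bar_mkAlgHom, barFree_algebraMap]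

theorem bar_HB {i : ℤ} (h : validIdx m n i) : bar hσq hσt (HB m n i h) = HBinv m n i h :=
  (bar_mkAlgHom hσq hσt _).trans (barFree_fH σ h)

theorem bar_HBinv {i : ℤ} (h : validIdx m n i) : bar hσq hσt (HBinv m n i h) = HB m n i h := by
  rw [← mkAlgHom_fHinv, bar_mkAlgHom, barFree_fHinv hσq]

theorem bar_EB : bar hσq hσt (EB m n) = EB m n :=
  (bar_mkAlgHom hσq hσt _).trans (barFree_fE σ)

theorem bar_bar (x : WB m n) : bar hσq hσt (bar hσq hσt x) = x := by
  refine RingHom.congr_fun (f := (bar hσq hσt).comp (bar hσq hσt)) (g := RingHom.id _)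
    (ringHom_ext (fun c => ?_) (fun i h => ?_) ?_) x
  · simp only [RingHom.comp_apply, bar_algebraMap, involutive_of_map_qv_of_map_tv hσq hσt c,
      RingHom.id_apply]
  · simp only [RingHom.comp_apply, bar_HB, bar_HBinv, RingHom.id_apply]
  · simp only [RingHom.comp_apply, bar_EB, RingHom.id_apply]

end WB

theorem bar_involution_exists_unique_general (m n : ℕ)
    (σ : KK →+* KK) (hσq : σ qv = qv⁻¹) (hσt : σ tv = tv⁻¹) :
    ∃! f : WB m n →+* WB m n,
      (∀ x, f (f x) = x) ∧
      (∀ c : KK, f (algebraMap KK (WB m n) c) = algebraMap KK (WB m n) (σ c)) ∧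
      (∀ (i : ℤ) (h : validIdx m n i), f (HB m n i h) = HBinv m n i h) ∧
      f (EB m n) = EB m n := by
  refine ⟨WB.bar hσq hσt, ⟨WB.bar_bar hσq hσt, WB.bar_algebraMap hσq hσt,
    fun _ => WB.bar_HB hσq hσt, WB.bar_EB hσq hσt⟩, ?_⟩
  rintro f ⟨-, hc, hH, hE⟩
  exact WB.ringHom_ext (fun c => by rw [hc, WB.bar_algebraMap])
    (fun i h => by rw [hH, WB.bar_HB]) (by rw [hE, WB.bar_EB])

/-- Given the bar involution `σ` on `ℚ(q,t)` (the field endomorphism with `q ↦ q⁻¹`,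
`t ↦ t⁻¹`), there is a unique involutive ring homomorphism on `B_{m,n}(q,t)` which is
`σ`-semilinear and satisfies `H̄ᵢ = Hᵢ⁻¹ = Hᵢ - (q - q⁻¹)` and `ē = e`. -/
theorem bar_involution_exists_unique (m n : ℕ) (hm : 1 ≤ m) (hn : 1 ≤ n)
    (σ : KK →+* KK) (hσq : σ qv = qv⁻¹) (hσt : σ tv = tv⁻¹) :
    ∃! f : WB m n →+* WB m n,
      (∀ x, f (f x) = x) ∧
      (∀ c : KK, f (algebraMap KK (WB m n) c) = algebraMap KK (WB m n) (σ c)) ∧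
      (∀ (i : ℤ) (h : validIdx m n i), f (HB m n i h) = HBinv m n i h) ∧
      f (EB m n) = EB m n :=
  bar_involution_exists_unique_general m n σ hσq hσt

end
end

section
/- In B_{m,n}(q,t), for every k with 0 ≤ k ≤ min{m,n} − 1, the element e_{k+1} can also be written with the Hecke factors on the other side: e_{k+1} = e_k · (H_k H_{k-1} ⋯ H_1) · (H_{-k}⁻¹ H_{-(k-1)}⁻¹ ⋯ H_{-1}⁻¹) · e. -/
open scoped Classical

noncomputable section

private lemma Commute.lcomm' {M : Type*} [Semigroup M] {a b : M} (h : Commute a b) (c : M) :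
    a * (b * c) = b * (a * c) := by rw [← mul_assoc, h.eq, mul_assoc]

lemma HB_comm (m n : ℕ) (i : ℤ) (hi : validIdx m n i) (j : ℤ) (hj : validIdx m n j)
    (hij : 1 < |i - j|) : Commute (HB m n i hi) (HB m n j hj) := by
  show _ * _ = _ * _
  rw [HB, HB, ← map_mul, ← map_mul]
  exact RingQuot.mkAlgHom_rel KK (WBrel.comm i hi j hj hij)

lemma Htil_comm (m n : ℕ) (i j : ℤ) (hij : 1 < |i - j|) :
    Commute (Htil m n i) (Htil m n j) := by
  unfold Htil
  by_cases hi : validIdx m n i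
  · by_cases hj : validIdx m n j
    · rw [dif_pos hi, dif_pos hj]; exact HB_comm m n i hi j hj hij
    · rw [dif_neg hj]; exact Commute.one_right _
  · rw [dif_neg hi]; exact Commute.one_left _

lemma Htil_E_comm (m n : ℕ) (i : ℤ) (h2 : 2 ≤ |i|) :
    Commute (Htil m n i) (EB m n) := by
  unfold Htil
  by_cases hi : validIdx m n i
  · rw [dif_pos hi]
    show _ * _ = _ * _
    rw [HB, EB, ← map_mul, ← map_mul]
    exact RingQuot.mkAlgHom_rel KK (WBrel.commE i hi h2)
  · rw [dif_neg hi]; exact Commute.one_left _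

lemma commute_Htilinv_right (m n : ℕ) (i : ℤ) {a : WB m n} (h : Commute a (Htil m n i)) :
    Commute a (Htilinv m n i) := by
  by_cases hi : validIdx m n i
  · rw [Htil, dif_pos hi] at h
    rw [Htilinv, dif_pos hi, HBinv]
    refine Commute.sub_right (a := a) (b := HB m n i hi)
      (c := algebraMap KK (WB m n) (qv - qv⁻¹)) h ?_
    exact Algebra.commute_algebraMap_right (qv - qv⁻¹) a
  · rw [Htilinv, dif_neg hi]; exact Commute.one_right _

lemma commute_Htilinv_left (m n : ℕ) (i : ℤ) {a : WB m n} (h : Commute (Htil m n i) a) :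
    Commute (Htilinv m n i) a := (commute_Htilinv_right m n i h.symm).symm

lemma ek_comm (m n r : ℕ) (i : ℤ) (h : (r : ℤ) + 1 ≤ |i|) :
    Commute (Htil m n i) (ek m n r) := by
  induction r with
  | zero => rw [ek]; exact Commute.one_right _
  | succ r ih =>
    have hr : (0:ℤ) ≤ (r:ℤ) := Int.natCast_nonneg r
    push_cast at h
    have h2 : (2:ℤ) ≤ |i| := by linarith
    rw [ek]
    refine (((Htil_E_comm m n i h2).mul_right ?_).mul_right ?_).mul_right
      (ih (by linarith))
    · refine Commute.list_prod_right _ _ (fun x hx => ?_)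
      rw [List.mem_map] at hx
      obtain ⟨j, hj, rfl⟩ := hx
      rw [List.mem_range] at hj
      refine commute_Htilinv_right m n _ (Htil_comm m n _ _ ?_)
      have hj' : ((j:ℤ)+1) ≤ (r:ℤ) := by exact_mod_cast hj
      push_cast
      rcases abs_cases i with ⟨e1, _⟩ | ⟨e1, _⟩ <;>
        rcases abs_cases (i - -((j:ℤ)+1)) with ⟨e2, _⟩ | ⟨e2, _⟩ <;>
        rw [e1] at h <;> rw [e2] <;> omega
    · refine Commute.list_prod_right _ _ (fun x hx => ?_)
      rw [List.mem_map] at hx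
      obtain ⟨j, hj, rfl⟩ := hx
      rw [List.mem_range] at hj
      refine Htil_comm m n _ _ ?_
      have hj' : ((j:ℤ)+1) ≤ (r:ℤ) := by exact_mod_cast hj
      push_cast
      rcases abs_cases i with ⟨e1, _⟩ | ⟨e1, _⟩ <;>
        rcases abs_cases (i - ((j:ℤ)+1)) with ⟨e2, _⟩ | ⟨e2, _⟩ <;>
        rw [e1] at h <;> rw [e2] <;> omega

lemma ekinv_comm (m n r : ℕ) (i : ℤ) (h : (r : ℤ) + 1 ≤ |i|) :
    Commute (Htilinv m n i) (ek m n r) :=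
  commute_Htilinv_left m n i (ek_comm m n r i h)
/-- `e_{k+1} = e_k ⬝ (H_k H_{k-1} ⋯ H_1) ⬝ (H_{-k}⁻¹ H_{-(k-1)}⁻¹ ⋯ H_{-1}⁻¹) ⬝ e`
for every `0 ≤ k ≤ min{m,n} - 1`. -/
theorem ek_succ_other_side (m n : ℕ) (hm : 1 ≤ m) (hn : 1 ≤ n) (k : ℕ)
    (hk : k + 1 ≤ min m n) :
    ek m n (k + 1) =
      ek m n k *
        (((List.range k).map (fun j => Htil m n ((k - j : ℕ) : ℤ))).prod) *
        (((List.range k).map (fun j => Htilinv m n (-((k - j : ℕ) : ℤ)))).prod) *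
        EB m n := by
  clear hm hn
  induction k with
  | zero => simp [ek]
  | succ k ih =>
    have ih' := ih (by omega)
    clear ih hk
    set Npk := ((List.range k).map (fun j => Htilinv m n (-((j + 1 : ℕ) : ℤ)))).prod with hNpk
    set Ppk := ((List.range k).map (fun j => Htil m n ((j + 1 : ℕ) : ℤ))).prod with hPpk
    set Prk := ((List.range k).map (fun j => Htil m n ((k - j : ℕ) : ℤ))).prod with hPrk
    set Nrk := ((List.range k).map (fun j => Htilinv m n (-((k - j : ℕ) : ℤ)))).prod with hNrk
    set H := Htil m n ((k + 1 : ℕ) : ℤ) with hH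
    set Hinv := Htilinv m n (-((k + 1 : ℕ) : ℤ)) with hHinv
    have hdef2 : ek m n (k + 1 + 1) =
        EB m n * (((List.range (k+1)).map (fun j => Htilinv m n (-((j + 1 : ℕ) : ℤ)))).prod) *
          (((List.range (k+1)).map (fun j => Htil m n ((j + 1 : ℕ) : ℤ))).prod) *
          ek m n (k + 1) := rfl
    have hdef1 : ek m n (k + 1) = EB m n * Npk * Ppk * ek m n k := rfl
    have hNp : ((List.range (k+1)).map (fun j => Htilinv m n (-((j + 1 : ℕ) : ℤ)))).prod
        = Npk * Hinv := by
      rw [List.range_succ, List.map_append, List.prod_append, List.map_cons,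
        List.map_nil, List.prod_cons, List.prod_nil, mul_one]
    have hPp : ((List.range (k+1)).map (fun j => Htil m n ((j + 1 : ℕ) : ℤ))).prod
        = Ppk * H := by
      rw [List.range_succ, List.map_append, List.prod_append, List.map_cons,
        List.map_nil, List.prod_cons, List.prod_nil, mul_one]
    have hPr : ((List.range (k+1)).map (fun j => Htil m n ((k + 1 - j : ℕ) : ℤ))).prod
        = H * Prk := by
      have hmap : List.map ((fun j => Htil m n ((k + 1 - j : ℕ) : ℤ)) ∘ Nat.succ)
          (List.range k) = List.map (fun j => Htil m n ((k - j : ℕ) : ℤ)) (List.range k) :=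
        List.map_congr_left (fun j hj => by
          show Htil m n ((k + 1 - Nat.succ j : ℕ) : ℤ) = Htil m n ((k - j : ℕ) : ℤ)
          congr 1; omega)
      rw [List.range_succ_eq_map, List.map_cons, List.prod_cons, List.map_map, hmap,
        ← hPrk, hH]
      norm_num
    have hNr : ((List.range (k+1)).map (fun j => Htilinv m n (-((k + 1 - j : ℕ) : ℤ)))).prod
        = Hinv * Nrk := by
      have hmap : List.map ((fun j => Htilinv m n (-((k + 1 - j : ℕ) : ℤ))) ∘ Nat.succ)
          (List.range k) = List.map (fun j => Htilinv m n (-((k - j : ℕ) : ℤ)))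
          (List.range k) :=
        List.map_congr_left (fun j hj => by
          show Htilinv m n (-((k + 1 - Nat.succ j : ℕ) : ℤ)) = Htilinv m n (-((k - j : ℕ) : ℤ))
          congr 2; omega)
      rw [List.range_succ_eq_map, List.map_cons, List.prod_cons, List.map_map, hmap,
        ← hNrk, hHinv]
      norm_num
    -- commutation facts
    have habs : ∀ j : ℕ, j < k → 1 < |(-((k:ℤ)+1)) - ((j:ℤ)+1)| := by
      intro j hj
      have : ((j:ℤ)) < (k:ℤ) := by exact_mod_cast hj
      rcases abs_cases ((-((k:ℤ)+1)) - ((j:ℤ)+1)) with ⟨e2, _⟩ | ⟨e2, _⟩ <;> rw [e2] <;> omega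
    have c1 : Commute Hinv Ppk := by
      rw [hHinv, hPpk]
      refine commute_Htilinv_left m n _ (Commute.list_prod_right _ _ (fun x hx => ?_))
      rw [List.mem_map] at hx
      obtain ⟨j, hj, rfl⟩ := hx
      rw [List.mem_range] at hj
      refine Htil_comm m n _ _ ?_
      push_cast
      exact habs j hj
    have c5 : Commute Hinv Prk := by
      rw [hHinv, hPrk]
      refine commute_Htilinv_left m n _ (Commute.list_prod_right _ _ (fun x hx => ?_))
      rw [List.mem_map] at hx
      obtain ⟨j, hj, rfl⟩ := hx
      rw [List.mem_range] at hj
      refine Htil_comm m n _ _ ?_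
      have h1 : (((k - j : ℕ)) : ℤ) ≤ (k:ℤ) := by
        exact_mod_cast Nat.sub_le k j
      have h0 : (0:ℤ) ≤ (((k - j : ℕ)) : ℤ) := Int.natCast_nonneg _
      push_cast
      rcases abs_cases ((-((k:ℤ)+1)) - (((k - j : ℕ)):ℤ)) with ⟨e2, _⟩ | ⟨e2, _⟩ <;>
        rw [e2] <;> omega
    have c2 : Commute Hinv (ek m n k) := by
      rw [hHinv]
      refine ekinv_comm m n k _ ?_
      push_cast
      rw [abs_of_nonpos (by omega : (-((k:ℤ)+1)) ≤ 0)]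
      omega
    have c3 : Commute H (ek m n k) := by
      rw [hH]
      refine ek_comm m n k _ ?_
      push_cast
      rw [abs_of_nonneg (by omega : (0:ℤ) ≤ (k:ℤ)+1)]
    have c4 : Commute Hinv H := by
      rw [hHinv, hH]
      refine commute_Htilinv_left m n _ (Htil_comm m n _ _ ?_)
      push_cast
      rcases abs_cases ((-((k:ℤ)+1)) - ((k:ℤ)+1)) with ⟨e2, _⟩ | ⟨e2, _⟩ <;> rw [e2] <;> omega
    calc ek m n (k + 1 + 1)
        = EB m n * (Npk * Hinv) * (Ppk * H) * (ek m n k * Prk * Nrk * EB m n) := by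
          rw [hdef2, hNp, hPp, ih']
      _ = (EB m n * Npk * Ppk * ek m n k) * ((H * Prk) * ((Hinv * Nrk) * EB m n)) := by
          simp only [mul_assoc]
          rw [c1.lcomm', c3.lcomm', c2.lcomm', c4.lcomm', c5.lcomm']
      _ = ek m n (k + 1) *
            (((List.range (k+1)).map (fun j => Htil m n ((k + 1 - j : ℕ) : ℤ))).prod) *
            (((List.range (k+1)).map (fun j => Htilinv m n (-((k + 1 - j : ℕ) : ℤ)))).prod) *
            EB m n := by
          rw [hPr, hNr, hdef1]
          simp only [mul_assoc]
end
end

section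
/- In B_{m,n}(q,t), for all integers i, k with 1 ≤ i < k ≤ min{m,n}, one has e_k = e_k H_i H_{-i}⁻¹ and e_k = H_{-i}⁻¹ H_i e_k. -/
open scoped Classical

noncomputable section

namespace WBaux

variable {m n : ℕ}

/-- swap helper -/
lemma cmm {R : Type*} [Monoid R] {a b : R} (h : Commute a b) (c : R) :
    a * (b * c) = b * (a * c) := by
  rw [← mul_assoc, h.eq, mul_assoc]

lemma qv_ne : qv ≠ 0 := by
  have hinj : Function.Injective (algebraMap (MvPolynomial (Fin 2) ℚ) KK) :=
    IsFractionRing.injective _ _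
  intro h
  exact MvPolynomial.X_ne_zero 0 (hinj (h.trans (map_zero _).symm))

lemma qv_mul_inv : qv * qv⁻¹ = 1 := mul_inv_cancel₀ qv_ne

lemma wb_rel {x y : FreeAlgebra KK (WBgen m n)} (h : WBrel m n x y) :
    RingQuot.mkAlgHom KK (WBrel m n) x = RingQuot.mkAlgHom KK (WBrel m n) y :=
  RingQuot.mkAlgHom_rel _ h

lemma map_fHinv (i : ℤ) (h : validIdx m n i) :
    RingQuot.mkAlgHom KK (WBrel m n) (fHinv m n i h) = HBinv m n i h := by
  simp only [fHinv, HBinv, map_sub, AlgHom.commutes]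
  rfl

lemma quad_generic {R : Type*} [Ring R] (a x y : R) (h0 : (a - x) * (a + y) = 0)
    (hx : x * a = a * x) (hy : y * a = a * y) (hxy : x * y = 1) :
    a * (a - (x - y)) = 1 ∧ (a - (x - y)) * a = 1 := by
  constructor
  · have key : a * (a - (x - y)) = (a - x) * (a + y) + (x * a - a * x) + x * y := by
      noncomm_ring
    rw [key, h0, hx, hxy]
    simp
  · have key : (a - (x - y)) * a = (a - x) * (a + y) + (y * a - a * y) + x * y := by
      noncomm_ring
    rw [key, h0, hy, hxy]
    simp

lemma HB_mul_HBinv (i : ℤ) (h : validIdx m n i) :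
    HB m n i h * HBinv m n i h = 1 ∧ HBinv m n i h * HB m n i h = 1 := by
  have h0 := wb_rel (WBrel.quad i h)
  simp only [map_mul, map_sub, map_add, map_zero, AlgHom.commutes] at h0
  have hx : algebraMap KK (WB m n) qv * HB m n i h = HB m n i h * algebraMap KK (WB m n) qv :=
    Algebra.commutes _ _
  have hy : algebraMap KK (WB m n) qv⁻¹ * HB m n i h
      = HB m n i h * algebraMap KK (WB m n) qv⁻¹ := Algebra.commutes _ _
  have hxy : algebraMap KK (WB m n) qv * algebraMap KK (WB m n) qv⁻¹ = 1 := by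
    rw [← map_mul, qv_mul_inv, map_one]
  have hs : HBinv m n i h
      = HB m n i h - (algebraMap KK (WB m n) qv - algebraMap KK (WB m n) qv⁻¹) := by
    rw [HBinv, map_sub]
  rw [hs]
  exact quad_generic _ _ _ h0 hx hy hxy

/-- unconditional inverse lemmas -/
lemma til_mul_inv (i : ℤ) : Htil m n i * Htilinv m n i = 1 := by
  unfold Htil Htilinv
  split
  · exact (HB_mul_HBinv i _).1
  · simp

lemma inv_mul_til (i : ℤ) : Htilinv m n i * Htil m n i = 1 := by
  unfold Htil Htilinv
  split
  · exact (HB_mul_HBinv i _).2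
  · simp

/-! ### Commutation lemmas (unconditional thanks to junk value 1) -/

lemma Htil_comm (i j : ℤ) (hij : 1 < |i - j|) :
    Commute (Htil m n i) (Htil m n j) := by
  unfold Htil
  split
  · split
    · have := wb_rel (WBrel.comm i ‹_› j ‹_› hij)
      simp only [map_mul] at this
      exact this
    · exact Commute.one_right _
  · exact Commute.one_left _

lemma E_comm (i : ℤ) (h2 : 2 ≤ |i|) : Commute (EB m n) (Htil m n i) := by
  unfold Htil
  split
  · have := wb_rel (WBrel.commE i ‹_› h2)
    simp only [map_mul] at this
    exact (Commute.symm this : _)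
  · exact Commute.one_right _

lemma comm_inv_right {x : WB m n} {i : ℤ} (h : Commute x (Htil m n i)) :
    Commute x (Htilinv m n i) := by
  unfold Htil at h
  unfold Htilinv
  split
  case isTrue hv =>
    rw [dif_pos hv] at h
    unfold HBinv
    have hc : Commute x (algebraMap KK (WB m n) (qv - qv⁻¹)) :=
      ((Algebra.commutes (qv - qv⁻¹) x).symm : _)
    exact @Commute.sub_right (WB m n) _ x (HB m n i hv) _ h hc
  case isFalse _ => exact Commute.one_right _

lemma comm_inv_left {x : WB m n} {i : ℤ} (h : Commute (Htil m n i) x) :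
    Commute (Htilinv m n i) x := (comm_inv_right h.symm).symm

lemma Htil_zero : Htil m n 0 = 1 := by
  unfold Htil
  rw [dif_neg]
  intro h
  rcases h with ⟨h1, _⟩ | ⟨h1, _⟩ <;> omega

lemma Pg_Ng_comm (i j : ℕ) : Commute (Htil m n (i : ℤ)) (Htil m n (-(j : ℤ))) := by
  rcases Nat.eq_zero_or_pos i with hi | hi
  · subst hi
    rw [show ((0 : ℕ) : ℤ) = 0 by norm_num, Htil_zero]
    exact Commute.one_left _
  · rcases Nat.eq_zero_or_pos j with hj | hj
    · subst hj
      rw [show (-((0 : ℕ) : ℤ)) = 0 by norm_num, Htil_zero]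
      exact Commute.one_right _
    · apply Htil_comm
      rw [lt_abs]
      omega

lemma Pg_Pg_comm (i j : ℕ) (h : i + 2 ≤ j ∨ j + 2 ≤ i) :
    Commute (Htil m n (i : ℤ)) (Htil m n (j : ℤ)) := by
  apply Htil_comm
  rw [lt_abs]
  omega

lemma Ng_Ng_comm (i j : ℕ) (h : i + 2 ≤ j ∨ j + 2 ≤ i) :
    Commute (Htil m n (-(i : ℤ))) (Htil m n (-(j : ℤ))) := by
  apply Htil_comm
  rw [lt_abs]
  omega

lemma E_Pg_comm (i : ℕ) (h : 2 ≤ i) : Commute (EB m n) (Htil m n (i : ℤ)) := by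
  apply E_comm
  rw [le_abs]
  omega

lemma E_Ng_comm (i : ℕ) (h : 2 ≤ i) : Commute (EB m n) (Htil m n (-(i : ℤ))) := by
  apply E_comm
  rw [le_abs]
  omega

/-! ### validity helpers -/

lemma validP (i : ℕ) (h1 : 1 ≤ i) (h2 : i + 1 ≤ n) : validIdx m n (i : ℤ) := by
  left; omega

lemma validN (i : ℕ) (h1 : 1 ≤ i) (h2 : i + 1 ≤ m) : validIdx m n (-(i : ℤ)) := by
  right; omega

/-! ### braid lemmas -/

lemma Htil_braid (i : ℤ) (hi : validIdx m n i) (hi1 : validIdx m n (i + 1)) :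
    Htil m n i * Htil m n (i + 1) * Htil m n i
      = Htil m n (i + 1) * Htil m n i * Htil m n (i + 1) := by
  unfold Htil
  rw [dif_pos hi, dif_pos hi1]
  have := wb_rel (WBrel.braid i hi hi1)
  simp only [map_mul] at this
  exact this

lemma Pg_braid (i : ℕ) (h1 : 1 ≤ i) (h2 : i + 2 ≤ n) :
    Htil m n (i : ℤ) * Htil m n ((i + 1 : ℕ) : ℤ) * Htil m n (i : ℤ)
      = Htil m n ((i + 1 : ℕ) : ℤ) * Htil m n (i : ℤ) * Htil m n ((i + 1 : ℕ) : ℤ) := by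
  have e : ((i + 1 : ℕ) : ℤ) = (i : ℤ) + 1 := by push_cast; ring
  rw [e]
  exact Htil_braid (i : ℤ) (validP i h1 (by omega))
    (by rw [show (i : ℤ) + 1 = ((i + 1 : ℕ) : ℤ) from e.symm]; exact validP (i + 1) (by omega) h2)

lemma Ng_braid (i : ℕ) (h1 : 1 ≤ i) (h2 : i + 2 ≤ m) :
    Htil m n (-((i + 1 : ℕ) : ℤ)) * Htil m n (-(i : ℤ)) * Htil m n (-((i + 1 : ℕ) : ℤ))
      = Htil m n (-(i : ℤ)) * Htil m n (-((i + 1 : ℕ) : ℤ)) * Htil m n (-(i : ℤ)) := by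
  have hv1 : validIdx m n (-((i + 1 : ℕ) : ℤ)) := validN (i + 1) (by omega) h2
  have hv2 : validIdx m n (-((i + 1 : ℕ) : ℤ) + 1) := by
    rw [show (-((i + 1 : ℕ) : ℤ) + 1) = -(i : ℤ) by push_cast; ring]
    exact validN i h1 (by omega)
  have h := Htil_braid (-((i + 1 : ℕ) : ℤ)) hv1 hv2
  rw [show (-((i + 1 : ℕ) : ℤ) + 1) = -(i : ℤ) by push_cast; ring] at h
  exact h
/-! ### generic braid variants in a monoid -/

section BraidVar

variable {R : Type*} [Monoid R] {a b a' b' : R}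

lemma bv1 (ha' : a' * a = 1) (hb : b * b' = 1) (hbr : a * b * a = b * a * b) :
    b * a * b' = a' * b * a := by
  have h := congrArg (fun x => a' * x * b') hbr
  simp only [← mul_assoc] at h
  rw [ha', one_mul] at h
  rw [mul_assoc (a' * b * a) b b', hb, mul_one] at h
  simpa [mul_assoc] using h

lemma bvinv (ha : a * a' = 1) (ha' : a' * a = 1) (hb : b * b' = 1) (hb' : b' * b = 1)
    (hbr : a * b * a = b * a * b) : a' * b' * a' = b' * a' * b' := by
  have h1 : (a' * b' * a') * (a * b * a) = 1 := by
    calc (a' * b' * a') * (a * b * a) = a' * b' * (a' * a) * b * a := by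
          simp only [mul_assoc]
      _ = a' * (b' * b) * a := by rw [ha']; simp only [mul_assoc, one_mul]
      _ = a' * a := by rw [hb']; rw [mul_one]
      _ = 1 := ha'
  have h2 : (a * b * a) * (b' * a' * b') = 1 := by
    rw [hbr]
    calc (b * a * b) * (b' * a' * b') = b * a * (b * b') * a' * b' := by
          simp only [mul_assoc]
      _ = b * (a * a') * b' := by rw [hb]; simp only [mul_assoc, one_mul]
      _ = b * b' := by rw [ha]; rw [mul_one]
      _ = 1 := hb
  exact left_inv_eq_right_inv h1 h2

lemma bv3 (ha : a * a' = 1) (ha' : a' * a = 1) (hb : b * b' = 1) (hb' : b' * b = 1)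
    (hbr : a * b * a = b * a * b) : b * a' * b' = a' * b' * a := by
  have h2 : (b * a' * b') * (b * a * b') = 1 := by
    calc (b * a' * b') * (b * a * b') = b * a' * (b' * b) * a * b' := by
          simp only [mul_assoc]
      _ = b * (a' * a) * b' := by rw [hb']; simp only [mul_assoc, one_mul]
      _ = b * b' := by rw [ha']; rw [mul_one]
      _ = 1 := hb
  have h1 : (b * a * b') * (a' * b' * a) = 1 := by
    rw [bv1 ha' hb hbr]
    calc (a' * b * a) * (a' * b' * a) = a' * b * (a * a') * b' * a := by
          simp only [mul_assoc]
      _ = a' * (b * b') * a := by rw [ha]; simp only [mul_assoc, one_mul]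
      _ = a' * a := by rw [hb]; rw [mul_one]
      _ = 1 := ha'
  exact left_inv_eq_right_inv h2 h1

lemma bv2 (ha : a * a' = 1) (ha' : a' * a = 1) (hb : b * b' = 1) (hb' : b' * b = 1)
    (hbr : a * b * a = b * a * b) : b' * a' * b = a * b' * a' := by
  have v4 : a * b * a' = b' * a * b := bv1 hb' ha hbr.symm
  have h2 : (b' * a' * b) * (b' * a * b) = 1 := by
    calc (b' * a' * b) * (b' * a * b) = b' * a' * (b * b') * a * b := by
          simp only [mul_assoc]
      _ = b' * (a' * a) * b := by rw [hb]; simp only [mul_assoc, one_mul]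
      _ = b' * b := by rw [ha']; rw [mul_one]
      _ = 1 := hb'
  have h1 : (b' * a * b) * (a * b' * a') = 1 := by
    rw [← v4]
    calc (a * b * a') * (a * b' * a') = a * b * (a' * a) * b' * a' := by
          simp only [mul_assoc]
      _ = a * (b * b') * a' := by rw [ha']; simp only [mul_assoc, one_mul]
      _ = a * a' := by rw [hb]; rw [mul_one]
      _ = 1 := ha
  exact left_inv_eq_right_inv h2 h1

end BraidVar

/-! ### rel7 / rel8 wrappers -/

lemma rel7w (hm2 : 2 ≤ m) (hn2 : 2 ≤ n) (y : WB m n) :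
    EB m n * (Htilinv m n (-(1 : ℤ)) * (Htil m n (1 : ℤ) *
      (EB m n * (Htil m n (-(1 : ℤ)) * y))))
    = EB m n * (Htilinv m n (-(1 : ℤ)) * (Htil m n (1 : ℤ) *
      (EB m n * (Htil m n (1 : ℤ) * y)))) := by
  have h1 : validIdx m n 1 := by left; omega
  have hm1 : validIdx m n (-1) := by right; omega
  have h := wb_rel (WBrel.rel7 h1 hm1)
  simp only [map_mul, map_fHinv] at h
  have e1 : Htil m n 1 = HB m n 1 h1 := dif_pos h1
  have e2 : Htil m n (-1) = HB m n (-1) hm1 := dif_pos hm1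
  have e3 : Htilinv m n (-1) = HBinv m n (-1) hm1 := dif_pos hm1
  rw [e1, e2, e3]
  have hy := congrArg (fun x => x * y) h
  simp only [mul_assoc] at hy ⊢
  exact hy

lemma rel8w (hm2 : 2 ≤ m) (hn2 : 2 ≤ n) (y : WB m n) :
    Htil m n (-(1 : ℤ)) * (EB m n * (Htilinv m n (-(1 : ℤ)) *
      (Htil m n (1 : ℤ) * (EB m n * y))))
    = Htil m n (1 : ℤ) * (EB m n * (Htilinv m n (-(1 : ℤ)) *
      (Htil m n (1 : ℤ) * (EB m n * y)))) := by
  have h1 : validIdx m n 1 := by left; omega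
  have hm1 : validIdx m n (-1) := by right; omega
  have h := wb_rel (WBrel.rel8 h1 hm1)
  simp only [map_mul, map_fHinv] at h
  have e1 : Htil m n 1 = HB m n 1 h1 := dif_pos h1
  have e2 : Htil m n (-1) = HB m n (-1) hm1 := dif_pos hm1
  have e3 : Htilinv m n (-1) = HBinv m n (-1) hm1 := dif_pos hm1
  rw [e1, e2, e3]
  have hy := congrArg (fun x => x * y) h
  simp only [mul_assoc] at hy ⊢
  exact hy
end WBaux

/-! ### cumulative products -/

def Aprod (m n : ℕ) : ℕ → WB m n
  | 0 => 1
  | k + 1 => Aprod m n k * Htilinv m n (-((k + 1 : ℕ) : ℤ))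

def Bprod (m n : ℕ) : ℕ → WB m n
  | 0 => 1
  | k + 1 => Bprod m n k * Htil m n ((k + 1 : ℕ) : ℤ)

def Cprod (m n : ℕ) : ℕ → WB m n
  | 0 => 1
  | k + 1 => Htil m n ((k + 1 : ℕ) : ℤ) * Cprod m n k

def Dprod (m n : ℕ) : ℕ → WB m n
  | 0 => 1
  | k + 1 => Htilinv m n (-((k + 1 : ℕ) : ℤ)) * Dprod m n k

def Ashp (m n : ℕ) : ℕ → WB m n
  | 0 => 1
  | r + 1 => Ashp m n r * Htilinv m n (-((r + 1 + 1 : ℕ) : ℤ))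

def Bshp (m n : ℕ) : ℕ → WB m n
  | 0 => 1
  | r + 1 => Bshp m n r * Htil m n ((r + 1 + 1 : ℕ) : ℤ)

namespace WBaux

variable {m n : ℕ}

lemma Aprod_succ (k : ℕ) :
    Aprod m n (k + 1) = Aprod m n k * Htilinv m n (-((k + 1 : ℕ) : ℤ)) := rfl
lemma Bprod_succ (k : ℕ) :
    Bprod m n (k + 1) = Bprod m n k * Htil m n ((k + 1 : ℕ) : ℤ) := rfl
lemma Cprod_succ (k : ℕ) :
    Cprod m n (k + 1) = Htil m n ((k + 1 : ℕ) : ℤ) * Cprod m n k := rfl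
lemma Dprod_succ (k : ℕ) :
    Dprod m n (k + 1) = Htilinv m n (-((k + 1 : ℕ) : ℤ)) * Dprod m n k := rfl
lemma Ashp_succ (r : ℕ) :
    Ashp m n (r + 1) = Ashp m n r * Htilinv m n (-((r + 1 + 1 : ℕ) : ℤ)) := rfl
lemma Bshp_succ (r : ℕ) :
    Bshp m n (r + 1) = Bshp m n r * Htil m n ((r + 1 + 1 : ℕ) : ℤ) := rfl

lemma list_A (k : ℕ) :
    ((List.range k).map (fun j => Htilinv m n (-((j + 1 : ℕ) : ℤ)))).prod = Aprod m n k := by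
  induction k with
  | zero => simp [Aprod]
  | succ k ih =>
      rw [List.range_succ, List.map_append, List.prod_append, List.map_singleton,
        List.prod_singleton, ih, Aprod_succ]

lemma list_B (k : ℕ) :
    ((List.range k).map (fun j => Htil m n ((j + 1 : ℕ) : ℤ))).prod = Bprod m n k := by
  induction k with
  | zero => simp [Bprod]
  | succ k ih =>
      rw [List.range_succ, List.map_append, List.prod_append, List.map_singleton,
        List.prod_singleton, ih, Bprod_succ]

lemma ek_succ (k : ℕ) :
    ek m n (k + 1) = EB m n * Aprod m n k * Bprod m n k * ek m n k := by
  rw [ek, list_A, list_B]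

/-! ### commuting with products -/

lemma comm_Aprod {x : WB m n} {k : ℕ}
    (h : ∀ j : ℕ, 1 ≤ j → j ≤ k → Commute x (Htilinv m n (-(j : ℤ)))) :
    Commute x (Aprod m n k) := by
  induction k with
  | zero => exact Commute.one_right _
  | succ k ih =>
      exact (ih fun j h1 h2 => h j h1 (by omega)).mul_right (h (k + 1) (by omega) le_rfl)

lemma comm_Bprod {x : WB m n} {k : ℕ}
    (h : ∀ j : ℕ, 1 ≤ j → j ≤ k → Commute x (Htil m n (j : ℤ))) :
    Commute x (Bprod m n k) := by
  induction k with
  | zero => exact Commute.one_right _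
  | succ k ih =>
      exact (ih fun j h1 h2 => h j h1 (by omega)).mul_right (h (k + 1) (by omega) le_rfl)

lemma comm_Cprod {x : WB m n} {k : ℕ}
    (h : ∀ j : ℕ, 1 ≤ j → j ≤ k → Commute x (Htil m n (j : ℤ))) :
    Commute x (Cprod m n k) := by
  induction k with
  | zero => exact Commute.one_right _
  | succ k ih =>
      exact (h (k + 1) (by omega) le_rfl).mul_right (ih fun j h1 h2 => h j h1 (by omega))

lemma comm_Dprod {x : WB m n} {k : ℕ}
    (h : ∀ j : ℕ, 1 ≤ j → j ≤ k → Commute x (Htilinv m n (-(j : ℤ)))) :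
    Commute x (Dprod m n k) := by
  induction k with
  | zero => exact Commute.one_right _
  | succ k ih =>
      exact (h (k + 1) (by omega) le_rfl).mul_right (ih fun j h1 h2 => h j h1 (by omega))

lemma comm_Ashp {x : WB m n} {k : ℕ}
    (h : ∀ j : ℕ, 2 ≤ j → j ≤ k + 1 → Commute x (Htilinv m n (-(j : ℤ)))) :
    Commute x (Ashp m n k) := by
  induction k with
  | zero => exact Commute.one_right _
  | succ k ih =>
      exact (ih fun j h1 h2 => h j h1 (by omega)).mul_right (h (k + 1 + 1) (by omega) le_rfl)

lemma comm_Bshp {x : WB m n} {k : ℕ}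
    (h : ∀ j : ℕ, 2 ≤ j → j ≤ k + 1 → Commute x (Htil m n (j : ℤ))) :
    Commute x (Bshp m n k) := by
  induction k with
  | zero => exact Commute.one_right _
  | succ k ih =>
      exact (ih fun j h1 h2 => h j h1 (by omega)).mul_right (h (k + 1 + 1) (by omega) le_rfl)

lemma comm_ek {x : WB m n} {k : ℕ} (hE : Commute x (EB m n))
    (hP : ∀ j : ℕ, 1 ≤ j → j < k → Commute x (Htil m n (j : ℤ)))
    (hN : ∀ j : ℕ, 1 ≤ j → j < k → Commute x (Htilinv m n (-(j : ℤ)))) :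
    Commute x (ek m n k) := by
  induction k with
  | zero => exact Commute.one_right _
  | succ k ih =>
      rw [ek_succ]
      exact ((hE.mul_right (comm_Aprod fun j h1 h2 => hN j h1 (by omega))).mul_right
        (comm_Bprod fun j h1 h2 => hP j h1 (by omega))).mul_right
        (ih (fun j h1 h2 => hP j h1 (by omega)) (fun j h1 h2 => hN j h1 (by omega)))

/-! ### slide lemmas -/

lemma slideB : ∀ k i : ℕ, 1 ≤ i → i + 1 ≤ k → k + 1 ≤ n →
    Htil m n ((i + 1 : ℕ) : ℤ) * Bprod m n k = Bprod m n k * Htil m n (i : ℤ) := by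
  intro k
  induction k with
  | zero => intro i h1 hik hk; omega
  | succ k ih =>
      intro i h1 hik hk
      rcases Nat.lt_or_ge i k with hlt | hge
      · -- i + 1 ≤ k : use ih
        have ihk := ih i h1 (by omega) (by omega)
        rw [Bprod_succ, ← mul_assoc, ihk, mul_assoc, mul_assoc,
          ((Pg_Pg_comm i (k + 1) (by omega)).symm).eq]
      · -- i = k, the braid base case
        have hik' : i = k := by omega
        subst hik'
        obtain ⟨i', rfl⟩ : ∃ i', i = i' + 1 := ⟨i - 1, by omega⟩
        have hC : Commute (Htil m n ((i' + 1 + 1 : ℕ) : ℤ)) (Bprod m n i') :=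
          comm_Bprod fun j hj1 hj2 => Pg_Pg_comm _ _ (by omega)
        have br := (Pg_braid (m := m) (n := n) (i' + 1) (by omega) (by omega)).symm
        rw [Bprod_succ, Bprod_succ]
        calc Htil m n ((i' + 1 + 1 : ℕ) : ℤ) *
              (Bprod m n i' * Htil m n ((i' + 1 : ℕ) : ℤ) * Htil m n ((i' + 1 + 1 : ℕ) : ℤ))
            = Bprod m n i' * (Htil m n ((i' + 1 + 1 : ℕ) : ℤ) * Htil m n ((i' + 1 : ℕ) : ℤ) *
              Htil m n ((i' + 1 + 1 : ℕ) : ℤ)) := by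
              simp only [mul_assoc]
              rw [cmm hC]
          _ = Bprod m n i' * (Htil m n ((i' + 1 : ℕ) : ℤ) * Htil m n ((i' + 1 + 1 : ℕ) : ℤ) *
              Htil m n ((i' + 1 : ℕ) : ℤ)) := by rw [br]
          _ = Bprod m n i' * Htil m n ((i' + 1 : ℕ) : ℤ) * Htil m n ((i' + 1 + 1 : ℕ) : ℤ) *
              Htil m n ((i' + 1 : ℕ) : ℤ) := by simp only [mul_assoc]

lemma slideA : ∀ k i : ℕ, 1 ≤ i → i + 1 ≤ k → k + 1 ≤ m →
    Htil m n (-((i + 1 : ℕ) : ℤ)) * Aprod m n k = Aprod m n k * Htil m n (-(i : ℤ)) := by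
  intro k
  induction k with
  | zero => intro i h1 hik hk; omega
  | succ k ih =>
      intro i h1 hik hk
      rcases Nat.lt_or_ge i k with hlt | hge
      · have ihk := ih i h1 (by omega) (by omega)
        have hc : Commute (Htil m n (-(i : ℤ))) (Htilinv m n (-((k + 1 : ℕ) : ℤ))) :=
          comm_inv_right (Ng_Ng_comm i (k + 1) (by omega))
        rw [Aprod_succ, ← mul_assoc, ihk, mul_assoc, mul_assoc, hc.eq]
      · have hik' : i = k := by omega
        subst hik'
        obtain ⟨i', rfl⟩ : ∃ i', i = i' + 1 := ⟨i - 1, by omega⟩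
        have hC : Commute (Htil m n (-((i' + 1 + 1 : ℕ) : ℤ))) (Aprod m n i') :=
          comm_Aprod fun j hj1 hj2 => comm_inv_right (Ng_Ng_comm _ _ (by omega))
        -- middle : N₂ * (Ninv₁ * Ninv₂) = Ninv₁ * Ninv₂ * N₁  via bv3
        have br : Htil m n (-((i' + 1 + 1 : ℕ) : ℤ)) * Htilinv m n (-((i' + 1 : ℕ) : ℤ)) *
              Htilinv m n (-((i' + 1 + 1 : ℕ) : ℤ))
            = Htilinv m n (-((i' + 1 : ℕ) : ℤ)) * Htilinv m n (-((i' + 1 + 1 : ℕ) : ℤ)) *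
              Htil m n (-((i' + 1 : ℕ) : ℤ)) :=
          bv3 (til_mul_inv _) (inv_mul_til _) (til_mul_inv _) (inv_mul_til _)
            ((Ng_braid (i' + 1) (by omega) (by omega)).symm)
        rw [Aprod_succ, Aprod_succ]
        calc Htil m n (-((i' + 1 + 1 : ℕ) : ℤ)) *
              (Aprod m n i' * Htilinv m n (-((i' + 1 : ℕ) : ℤ)) *
                Htilinv m n (-((i' + 1 + 1 : ℕ) : ℤ)))
            = Aprod m n i' * (Htil m n (-((i' + 1 + 1 : ℕ) : ℤ)) *
                Htilinv m n (-((i' + 1 : ℕ) : ℤ)) * Htilinv m n (-((i' + 1 + 1 : ℕ) : ℤ))) := by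
              simp only [mul_assoc]
              rw [cmm hC]
          _ = Aprod m n i' * (Htilinv m n (-((i' + 1 : ℕ) : ℤ)) *
                Htilinv m n (-((i' + 1 + 1 : ℕ) : ℤ)) * Htil m n (-((i' + 1 : ℕ) : ℤ))) := by
              rw [br]
          _ = Aprod m n i' * Htilinv m n (-((i' + 1 : ℕ) : ℤ)) *
                Htilinv m n (-((i' + 1 + 1 : ℕ) : ℤ)) * Htil m n (-((i' + 1 : ℕ) : ℤ)) := by
              simp only [mul_assoc]

lemma slideC (k : ℕ) (h1 : 1 ≤ k) (hv : k + 2 ≤ n) :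
    Cprod m n (k + 1) * Htil m n ((k + 1 : ℕ) : ℤ)
      = Htil m n (k : ℤ) * (Htil m n ((k + 1 : ℕ) : ℤ) * Cprod m n k) := by
  obtain ⟨k', rfl⟩ : ∃ k'', k = k'' + 1 := ⟨k - 1, by omega⟩
  have hC : Commute (Htil m n ((k' + 1 + 1 : ℕ) : ℤ)) (Cprod m n k') :=
    comm_Cprod fun j hj1 hj2 => Pg_Pg_comm _ _ (by omega)
  have br := Pg_braid (m := m) (n := n) (k' + 1) (by omega) (by omega)
  rw [Cprod_succ, Cprod_succ]
  calc Htil m n ((k' + 1 + 1 : ℕ) : ℤ) * (Htil m n ((k' + 1 : ℕ) : ℤ) * Cprod m n k') *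
        Htil m n ((k' + 1 + 1 : ℕ) : ℤ)
      = Htil m n ((k' + 1 + 1 : ℕ) : ℤ) * Htil m n ((k' + 1 : ℕ) : ℤ) *
        Htil m n ((k' + 1 + 1 : ℕ) : ℤ) * Cprod m n k' := by
        simp only [mul_assoc]
        rw [← hC.eq]
    _ = Htil m n ((k' + 1 : ℕ) : ℤ) * Htil m n ((k' + 1 + 1 : ℕ) : ℤ) *
        Htil m n ((k' + 1 : ℕ) : ℤ) * Cprod m n k' := by rw [← br]
    _ = Htil m n ((k' + 1 : ℕ) : ℤ) * (Htil m n ((k' + 1 + 1 : ℕ) : ℤ) *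
        (Htil m n ((k' + 1 : ℕ) : ℤ) * Cprod m n k')) := by simp only [mul_assoc]

lemma slideD (k : ℕ) (h1 : 1 ≤ k) (hv : k + 2 ≤ m) :
    Dprod m n (k + 1) * Htil m n (-((k + 1 : ℕ) : ℤ))
      = Htil m n (-(k : ℤ)) * (Htilinv m n (-((k + 1 : ℕ) : ℤ)) * Dprod m n k) := by
  obtain ⟨k', rfl⟩ : ∃ k'', k = k'' + 1 := ⟨k - 1, by omega⟩
  have hC : Commute (Htil m n (-((k' + 1 + 1 : ℕ) : ℤ))) (Dprod m n k') :=
    comm_Dprod fun j hj1 hj2 => comm_inv_right (Ng_Ng_comm _ _ (by omega))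
  have br : Htilinv m n (-((k' + 1 + 1 : ℕ) : ℤ)) * Htilinv m n (-((k' + 1 : ℕ) : ℤ)) *
        Htil m n (-((k' + 1 + 1 : ℕ) : ℤ))
      = Htil m n (-((k' + 1 : ℕ) : ℤ)) * Htilinv m n (-((k' + 1 + 1 : ℕ) : ℤ)) *
        Htilinv m n (-((k' + 1 : ℕ) : ℤ)) :=
    bv2 (til_mul_inv _) (inv_mul_til _) (til_mul_inv _) (inv_mul_til _)
      ((Ng_braid (k' + 1) (by omega) (by omega)).symm)
  rw [Dprod_succ, Dprod_succ]
  calc Htilinv m n (-((k' + 1 + 1 : ℕ) : ℤ)) *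
        (Htilinv m n (-((k' + 1 : ℕ) : ℤ)) * Dprod m n k') * Htil m n (-((k' + 1 + 1 : ℕ) : ℤ))
      = Htilinv m n (-((k' + 1 + 1 : ℕ) : ℤ)) * Htilinv m n (-((k' + 1 : ℕ) : ℤ)) *
        Htil m n (-((k' + 1 + 1 : ℕ) : ℤ)) * Dprod m n k' := by
        simp only [mul_assoc]
        rw [← hC.eq]
    _ = Htil m n (-((k' + 1 : ℕ) : ℤ)) * Htilinv m n (-((k' + 1 + 1 : ℕ) : ℤ)) *
        Htilinv m n (-((k' + 1 : ℕ) : ℤ)) * Dprod m n k' := by rw [br]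
    _ = Htil m n (-((k' + 1 : ℕ) : ℤ)) * (Htilinv m n (-((k' + 1 + 1 : ℕ) : ℤ)) *
        (Htilinv m n (-((k' + 1 : ℕ) : ℤ)) * Dprod m n k')) := by simp only [mul_assoc]
/-! ### small cases and decompositions -/

lemma swap3 {R : Type*} [Monoid R] {a b c d : R} (h : a * b = c * d) (y : R) :
    a * (b * y) = c * (d * y) := by
  rw [← mul_assoc, h, mul_assoc]

lemma swap4 {R : Type*} [Monoid R] {a b c d e : R} (h : a * b = c * (d * e)) (y : R) :
    a * (b * y) = c * (d * (e * y)) := by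
  rw [← mul_assoc, h, mul_assoc, mul_assoc]

lemma swapIH {R : Type*} [Monoid R] {x a b : R} (h : x * a = x * b) (y : R) :
    x * (a * y) = x * (b * y) := by
  rw [← mul_assoc, h, mul_assoc]

lemma ek_zero : ek m n 0 = 1 := rfl

lemma ek_one : ek m n 1 = EB m n := by
  rw [show ek m n 1 = EB m n * Aprod m n 0 * Bprod m n 0 * ek m n 0 from ek_succ 0,
    show Aprod m n 0 = 1 from rfl, show Bprod m n 0 = 1 from rfl,
    show ek m n 0 = 1 from rfl, mul_one, mul_one, mul_one]

lemma Aprod_one : Aprod m n 1 = Htilinv m n (-1 : ℤ) := by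
  rw [show Aprod m n 1 = Aprod m n 0 * Htilinv m n (-((0 + 1 : ℕ) : ℤ)) from Aprod_succ 0,
    show Aprod m n 0 = 1 from rfl, one_mul]
  norm_num

lemma Bprod_one : Bprod m n 1 = Htil m n (1 : ℤ) := by
  rw [show Bprod m n 1 = Bprod m n 0 * Htil m n (((0 + 1 : ℕ)) : ℤ) from Bprod_succ 0,
    show Bprod m n 0 = 1 from rfl, one_mul]
  norm_num

lemma Cprod_one : Cprod m n 1 = Htil m n (1 : ℤ) := by
  rw [show Cprod m n 1 = Htil m n (((0 + 1 : ℕ)) : ℤ) * Cprod m n 0 from Cprod_succ 0,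
    show Cprod m n 0 = 1 from rfl, mul_one]
  norm_num

lemma Dprod_one : Dprod m n 1 = Htilinv m n (-1 : ℤ) := by
  rw [show Dprod m n 1 = Htilinv m n (-((0 + 1 : ℕ) : ℤ)) * Dprod m n 0 from Dprod_succ 0,
    show Dprod m n 0 = 1 from rfl, mul_one]
  norm_num

lemma ek_two : ek m n 2 = EB m n * (Htilinv m n (-1 : ℤ) * (Htil m n (1 : ℤ) * EB m n)) := by
  rw [show ek m n 2 = EB m n * Aprod m n 1 * Bprod m n 1 * ek m n 1 from ek_succ 1,
    Aprod_one, Bprod_one, ek_one]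
  simp only [mul_assoc]

lemma Adecomp : ∀ r : ℕ, Aprod m n (r + 1) = Htilinv m n (-1 : ℤ) * Ashp m n r
  | 0 => by rw [show Ashp m n 0 = 1 from rfl, mul_one]; exact Aprod_one
  | r + 1 => by rw [Aprod_succ (r + 1), Adecomp r, Ashp_succ, mul_assoc]

lemma Bdecomp : ∀ r : ℕ, Bprod m n (r + 1) = Htil m n (1 : ℤ) * Bshp m n r
  | 0 => by rw [show Bshp m n 0 = 1 from rfl, mul_one]; exact Bprod_one
  | r + 1 => by rw [Bprod_succ (r + 1), Bdecomp r, Bshp_succ, mul_assoc]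

/-! ### the alternate form `e_{k+1} = e_k C_k D_k E` -/

lemma alt1 : ek m n 2 = ek m n 1 * (Cprod m n 1 * (Dprod m n 1 * EB m n)) := by
  rw [ek_two, ek_one, Cprod_one, Dprod_one]
  have hc : Commute (Htilinv m n (-1 : ℤ)) (Htil m n (1 : ℤ)) := by
    have := comm_inv_left ((Pg_Ng_comm (m := m) (n := n) 1 1).symm)
    simpa using this
  rw [cmm hc]

lemma altform : ∀ k : ℕ, ek m n (k + 1) = ek m n k * (Cprod m n k * (Dprod m n k * EB m n))
  | 0 => by
      rw [show ek m n (0 + 1) = EB m n from ek_one, show ek m n 0 = 1 from rfl,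
        show Cprod m n 0 = 1 from rfl, show Dprod m n 0 = 1 from rfl, one_mul, one_mul, one_mul]
  | 1 => alt1
  | (k + 1 + 1) => by
      have ih := altform (k + 1)
      -- abbreviations
      have c1 : Commute (Htilinv m n (-((k + 1 + 1 : ℕ) : ℤ))) (Bprod m n (k + 1)) :=
        comm_Bprod fun j h1 h2 => comm_inv_left ((Pg_Ng_comm j (k + 1 + 1)).symm)
      have c2 : Commute (Htilinv m n (-((k + 1 + 1 : ℕ) : ℤ))) (Htil m n ((k + 1 + 1 : ℕ) : ℤ)) :=
        comm_inv_left ((Pg_Ng_comm (k + 1 + 1) (k + 1 + 1)).symm)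
      have c3 : Commute (Htilinv m n (-((k + 1 + 1 : ℕ) : ℤ))) (ek m n (k + 1)) :=
        comm_ek (comm_inv_left ((E_Ng_comm (k + 1 + 1) (by omega)).symm))
          (fun j h1 h2 => comm_inv_left ((Pg_Ng_comm j (k + 1 + 1)).symm))
          (fun j h1 h2 => comm_inv_right (comm_inv_left (Ng_Ng_comm (k + 1 + 1) j (by omega))))
      have c4 : Commute (Htil m n ((k + 1 + 1 : ℕ) : ℤ)) (ek m n (k + 1)) :=
        comm_ek ((E_Pg_comm (k + 1 + 1) (by omega)).symm)
          (fun j h1 h2 => Pg_Pg_comm (k + 1 + 1) j (by omega))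
          (fun j h1 h2 => comm_inv_right (Pg_Ng_comm (k + 1 + 1) j))
      have c5 : Commute (Htilinv m n (-((k + 1 + 1 : ℕ) : ℤ))) (Cprod m n (k + 1)) :=
        comm_Cprod fun j h1 h2 => comm_inv_left ((Pg_Ng_comm j (k + 1 + 1)).symm)
      calc ek m n (k + 1 + 1 + 1)
          = EB m n * Aprod m n (k + 1 + 1) * Bprod m n (k + 1 + 1) * ek m n (k + 1 + 1) :=
            ek_succ (k + 1 + 1)
        _ = EB m n * (Aprod m n (k + 1) * Htilinv m n (-((k + 1 + 1 : ℕ) : ℤ))) *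
              (Bprod m n (k + 1) * Htil m n ((k + 1 + 1 : ℕ) : ℤ)) *
              (ek m n (k + 1) * (Cprod m n (k + 1) * (Dprod m n (k + 1) * EB m n))) := by
            rw [Aprod_succ, Bprod_succ, ih]
        _ = EB m n * Aprod m n (k + 1) * Bprod m n (k + 1) * ek m n (k + 1) *
              (Htil m n ((k + 1 + 1 : ℕ) : ℤ) * (Cprod m n (k + 1) *
                (Htilinv m n (-((k + 1 + 1 : ℕ) : ℤ)) * (Dprod m n (k + 1) * EB m n)))) := by
            simp only [mul_assoc]
            rw [cmm c1, cmm c2, cmm c3, cmm c4, cmm c5]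
        _ = ek m n (k + 1 + 1) * (Cprod m n (k + 1 + 1) * (Dprod m n (k + 1 + 1) * EB m n)) := by
            rw [ek_succ (k + 1), Cprod_succ (k + 1), Dprod_succ (k + 1)]
            simp only [mul_assoc]
/-! ### base case k = 1 (about `e_2`) -/

lemma base2 (hm2 : 2 ≤ m) (hn2 : 2 ≤ n) :
    (Htil m n (-1 : ℤ) * ek m n 2 = Htil m n (1 : ℤ) * ek m n 2) ∧
      (ek m n 2 * Htil m n (1 : ℤ) = ek m n 2 * Htil m n (-1 : ℤ)) := by
  constructor
  · rw [ek_two]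
    have h := rel8w hm2 hn2 1
    simp only [mul_one] at h
    exact h
  · rw [ek_two]
    have h := rel7w hm2 hn2 1
    simp only [mul_one] at h
    simp only [mul_assoc]
    exact h.symm

/-! ### the main lemma -/

lemma main : ∀ k : ℕ, 1 ≤ k → k + 1 ≤ m → k + 1 ≤ n → ∀ i : ℕ, 1 ≤ i → i ≤ k →
    (Htil m n (-(i : ℤ)) * ek m n (k + 1) = Htil m n (i : ℤ) * ek m n (k + 1)) ∧
      (ek m n (k + 1) * Htil m n (i : ℤ) = ek m n (k + 1) * Htil m n (-(i : ℤ))) := by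
  intro k
  induction k with
  | zero => intro h; omega
  | succ k ih =>
      intro hk1 hm' hn' i hi1 hik
      have hm2 : 2 ≤ m := by omega
      have hn2 : 2 ≤ n := by omega
      rcases Nat.eq_zero_or_pos k with rfl | hkpos
      · -- k = 0 : the e₂ base case, i = 1
        have hi : i = 1 := by omega
        subst hi
        simp only [Nat.cast_one]
        exact base2 hm2 hn2
      · constructor
        · -- left absorption
          rcases Nat.lt_or_ge i 2 with hi2 | hi2
          · -- i = 1 : via rel8
            have hi : i = 1 := by omega
            subst hi
            simp only [Nat.cast_one]
            have cAsP : Commute (Ashp m n k) (Htil m n (1 : ℤ)) := by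
              refine (comm_Ashp fun j h2 hj => ?_).symm
              have := comm_inv_right (Pg_Ng_comm (m := m) (n := n) 1 j)
              simpa using this
            have cBsE : Commute (Bshp m n k) (EB m n) :=
              (comm_Bshp fun j h2 hj => E_Pg_comm j h2).symm
            have cAsE : Commute (Ashp m n k) (EB m n) :=
              (comm_Ashp fun j h2 hj => comm_inv_right (E_Ng_comm j h2)).symm
            rw [ek_succ (k + 1), Adecomp k, Bdecomp k, ek_succ k]
            simp only [mul_assoc]
            rw [cmm cAsP, cmm cBsE, cmm cAsE]
            exact rel8w hm2 hn2 _
          · -- 2 ≤ i : slide down and use ih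
            obtain ⟨i0, rfl⟩ : ∃ i0, i = i0 + 1 := ⟨i - 1, by omega⟩
            have hE1 : Commute (Htil m n (-((i0 + 1 : ℕ) : ℤ))) (EB m n) :=
              (E_Ng_comm (i0 + 1) (by omega)).symm
            have hE2 : Commute (Htil m n ((i0 + 1 : ℕ) : ℤ)) (EB m n) :=
              (E_Pg_comm (i0 + 1) (by omega)).symm
            have sA := slideA (m := m) (n := n) (k + 1) i0 (by omega) (by omega) (by omega)
            have sB := slideB (m := m) (n := n) (k + 1) i0 (by omega) (by omega) (by omega)
            have cNB : Commute (Htil m n (-(i0 : ℤ))) (Bprod m n (k + 1)) :=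
              comm_Bprod fun j h1 h2 => (Pg_Ng_comm j i0).symm
            have cPA : Commute (Htil m n ((i0 + 1 : ℕ) : ℤ)) (Aprod m n (k + 1)) :=
              comm_Aprod fun j h1 h2 => comm_inv_right (Pg_Ng_comm (i0 + 1) j)
            have ihla := (ih (by omega) (by omega) (by omega) i0 (by omega) (by omega)).1
            rw [ek_succ (k + 1)]
            simp only [mul_assoc]
            rw [cmm hE1, swap3 sA, cmm cNB, cmm hE2, cmm cPA, swap3 sB, ihla]
        · -- right absorption
          rcases Nat.lt_or_ge i (k + 1) with hik1 | hik1
          · -- i ≤ k : directly from ih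
            have ihrb := (ih (by omega) (by omega) (by omega) i hi1 (by omega)).2
            rw [ek_succ (k + 1)]
            simp only [mul_assoc]
            rw [ihrb]
          · -- i = k + 1 : the hard case, via the alternate form
            have hik' : i = k + 1 := by omega
            subst hik'
            have cDP : Commute (Dprod m n (k + 1)) (Htil m n ((k + 1 : ℕ) : ℤ)) :=
              (comm_Dprod fun j h1 h2 => comm_inv_right (Pg_Ng_comm (k + 1) j)).symm
            have cCN : Commute (Cprod m n (k + 1)) (Htil m n (-(k : ℤ))) :=
              (comm_Cprod fun j h1 h2 => (Pg_Ng_comm j k).symm).symm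
            have sC := slideC (m := m) (n := n) k hkpos (by omega)
            have sD := slideD (m := m) (n := n) k hkpos (by omega)
            have ihrb := (ih (by omega) (by omega) (by omega) k hkpos le_rfl).2
            have eEP := (E_Pg_comm (m := m) (n := n) (k + 1) (by omega)).eq
            have eEN := (E_Ng_comm (m := m) (n := n) (k + 1) (by omega)).eq
            rw [altform (k + 1)]
            simp only [mul_assoc]
            rw [eEN, swap4 sD, cmm cCN, eEP, cmm cDP, swap4 sC, swapIH ihrb,
              Dprod_succ k, Cprod_succ k]
            simp only [mul_assoc]

end WBaux

/-- For `1 ≤ i < k ≤ min{m,n}`, one has `e_k = e_k H_i H_{-i}⁻¹` and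
`e_k = H_{-i}⁻¹ H_i e_k`. -/
theorem ek_absorbs_H (m n : ℕ) (hm : 1 ≤ m) (hn : 1 ≤ n) (i k : ℕ)
    (hi : 1 ≤ i) (hik : i < k) (hk : k ≤ min m n) :
    ek m n k = ek m n k * Htil m n (i : ℤ) * Htilinv m n (-(i : ℤ)) ∧
      ek m n k = Htilinv m n (-(i : ℤ)) * Htil m n (i : ℤ) * ek m n k := by
  obtain ⟨k', rfl⟩ : ∃ k', k = k' + 1 := ⟨k - 1, by omega⟩
  have hkm : k' + 1 ≤ m := le_trans hk (min_le_left _ _)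
  have hkn : k' + 1 ≤ n := le_trans hk (min_le_right _ _)
  obtain ⟨La, Rb⟩ := WBaux.main k' (by omega) hkm hkn i hi (by omega)
  constructor
  · rw [Rb, mul_assoc, WBaux.til_mul_inv, mul_one]
  · rw [mul_assoc, ← La, ← mul_assoc, WBaux.inv_mul_til, one_mul]

end
end

section
/- In B_{m,n}(q,t), for every k with 0 ≤ k ≤ min{m,n} and every index i with |i| ≥ k + 1 for which the generator H_i exists (i.e. k + 1 ≤ i ≤ n − 1 or k + 1 ≤ −i ≤ m − 1), one has H_i e_k = e_k H_i. -/
open scoped Classical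

noncomputable section

lemma commute_HB_HB {m n : ℕ} {i j : ℤ} (hi : validIdx m n i) (hj : validIdx m n j)
    (hij : 1 < |i - j|) : Commute (HB m n i hi) (HB m n j hj) := by
  have := RingQuot.mkAlgHom_rel KK (WBrel.comm i hi j hj hij)
  simp only [map_mul] at this
  exact this

lemma commute_HB_EB {m n : ℕ} {i : ℤ} (hi : validIdx m n i) (h2 : 2 ≤ |i|) :
    Commute (HB m n i hi) (EB m n) := by
  have := RingQuot.mkAlgHom_rel KK (WBrel.commE i hi h2)
  simp only [map_mul] at this
  exact this

lemma commute_HB_Htil {m n : ℕ} {i : ℤ} (hi : validIdx m n i) {j : ℤ}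
    (hij : 1 < |i - j|) : Commute (HB m n i hi) (Htil m n j) := by
  unfold Htil
  split
  · exact commute_HB_HB hi _ hij
  · exact Commute.one_right _

lemma aux_sub {R : Type*} [Ring R] {a b c : R} (h1 : a * b = b * a) (h2 : c * a = a * c) :
    a * (b - c) = (b - c) * a := by
  rw [mul_sub, sub_mul, h1, h2]

lemma commute_HB_Htilinv {m n : ℕ} {i : ℤ} (hi : validIdx m n i) {j : ℤ}
    (hij : 1 < |i - j|) : Commute (HB m n i hi) (Htilinv m n j) := by
  unfold Htilinv
  split
  · exact aux_sub (R := WB m n) (commute_HB_HB hi _ hij).eq (Algebra.commutes _ _)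
  · exact Commute.one_right _

/-- For `0 ≤ k ≤ min{m,n}` and any valid index `i` with `|i| ≥ k + 1`, the generator
`H i` commutes with `e_k`. -/
theorem H_comm_ek (m n : ℕ) (hm : 1 ≤ m) (hn : 1 ≤ n) (k : ℕ) (hk : k ≤ min m n)
    (i : ℤ) (h : validIdx m n i) (hik : (k : ℤ) + 1 ≤ |i|) :
    HB m n i h * ek m n k = ek m n k * HB m n i h := by
  induction k with
  | zero => simp [ek]
  | succ k ih =>
    have hi2 : ((k : ℤ) + 2 ≤ i ∨ i ≤ -((k : ℤ) + 2)) := by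
      rcases abs_cases i with ⟨he, _⟩ | ⟨he, _⟩
      · left; push_cast at hik; omega
      · right; push_cast at hik; omega
    have cE : Commute (HB m n i h) (EB m n) := by
      apply commute_HB_EB
      rw [le_abs]; omega
    have c1 : Commute (HB m n i h)
        (((List.range k).map (fun j => Htilinv m n (-((j + 1 : ℕ) : ℤ)))).prod) := by
      apply Commute.list_prod_right
      intro x hx
      simp only [List.mem_map, List.mem_range] at hx
      obtain ⟨j, hj, rfl⟩ := hx
      apply commute_HB_Htilinv h
      rw [lt_abs]; push_cast; omega
    have c2 : Commute (HB m n i h)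
        (((List.range k).map (fun j => Htil m n ((j + 1 : ℕ) : ℤ))).prod) := by
      apply Commute.list_prod_right
      intro x hx
      simp only [List.mem_map, List.mem_range] at hx
      obtain ⟨j, hj, rfl⟩ := hx
      apply commute_HB_Htil h
      rw [lt_abs]; push_cast; omega
    have cIH : Commute (HB m n i h) (ek m n k) := by
      apply ih (le_trans (Nat.le_succ k) hk)
      rw [le_abs]; push_cast; omega
    exact ((cE.mul_right c1).mul_right c2).mul_right cIH

end
end
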